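/- arXiv:2406.05363 — 6 statements merged into one kernel-verified Lean document; each statement's English description precedes it below -/
import Mathlib

section
/- Let V be a finite-dimensional vector space over a field K, M, N commuting endomorphisms of V, and λ, μ ∈ K. Then the generalized eigenspaces satisfy: (G_λ(M) ∩ G_μ(N)) + (G_μ(M) ∩ G_λ(N)) = G_{λμ}(MN) ∩ G_{λ+μ}(M+N), where G_ν(T) = ker(T − νE)^{dim V}. -/
open Polynomial Module

section helpers

variable {K V : Type*} [Field K] [AddCommGroup V] [Module K V]

/-- If `A` and `B` commute and each kills `x` after some power, so does `A + B`. -/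
lemma aux_add_pow {A B : Module.End K V} (h : Commute A B) {a b : ℕ} {x : V}
    (ha : (A ^ a) x = 0) (hb : (B ^ b) x = 0) : ((A + B) ^ (a + b)) x = 0 := by
  rw [h.add_pow]
  rw [LinearMap.sum_apply]
  refine Finset.sum_eq_zero fun i hi => ?_
  rcases le_or_gt b (a + b - i) with hbi | hbi
  · have hB : (B ^ (a + b - i)) x = 0 := by
      obtain ⟨c, hc⟩ := Nat.exists_eq_add_of_le hbi
      rw [hc, add_comm, pow_add, Module.End.mul_apply, hb, map_zero]
    simp [Module.End.mul_apply, hB]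
  · have hia : a ≤ i := by omega
    have hA : (A ^ i) x = 0 := by
      have : i = (i - a) + a := by omega
      rw [this, pow_add, Module.End.mul_apply, ha, map_zero]
    have hc : Commute (A ^ i) (B ^ (a + b - i) * ((a + b).choose i : Module.End K V)) :=
      (h.pow_pow i (a + b - i)).mul_right (Nat.commute_cast _ _)
    rw [mul_assoc, hc.eq, Module.End.mul_apply, hA, map_zero]

lemma aux_commute_aeval {A B : Module.End K V} (h : Commute A B) (p : K[X]) :
    Commute A (aeval B p) := by
  induction p using Polynomial.induction_on' with
  | add p q hp hq => rw [map_add]; exact hp.add_right hq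
  | monomial n a =>
      rw [aeval_monomial]
      exact (show Commute A ((algebraMap K (Module.End K V)) a) from
        (Algebra.commutes a A).symm).mul_right (h.pow_right n)

/-- The easy inclusion. -/
lemma aux_easy (M N : Module.End K V) (hcomm : M * N = N * M) (lam mu : K) :
    M.maxGenEigenspace lam ⊓ N.maxGenEigenspace mu ≤
      (M * N).maxGenEigenspace (lam * mu) ⊓ (M + N).maxGenEigenspace (lam + mu) := by
  intro x hx
  obtain ⟨hxM, hxN⟩ := Submodule.mem_inf.mp hx
  rw [Module.End.mem_maxGenEigenspace] at hxM hxN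
  obtain ⟨a, ha⟩ := hxM
  obtain ⟨b, hb⟩ := hxN
  have hMN : Commute M N := hcomm
  have hMl : Commute (M - lam • 1) N := hMN.sub_left ((Commute.one_left N).smul_left lam)
  have hNm : Commute (M - lam • 1) (N - mu • 1) :=
    hMl.sub_right ((Commute.one_right _).smul_right mu)
  refine Submodule.mem_inf.mpr ⟨?_, ?_⟩
  · rw [Module.End.mem_maxGenEigenspace]
    refine ⟨a + b, ?_⟩
    have id3 : M * N - (lam * mu) • (1 : Module.End K V)
        = (M - lam • 1) * N + lam • (N - mu • 1) := by
      simp only [sub_mul, mul_sub, smul_mul_assoc, mul_smul_comm, one_mul, mul_one,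
        smul_smul, smul_sub, smul_add]
      module
    rw [id3]
    have hNNm : Commute N (N - mu • 1) :=
      (Commute.refl N).sub_right ((Commute.one_right N).smul_right mu)
    have hcAB : Commute ((M - lam • 1) * N) (lam • (N - mu • 1)) :=
      (hNm.mul_left hNNm).smul_right lam
    refine aux_add_pow hcAB ?_ ?_
    · have hswap : ((M - lam • 1) * N) ^ a = N ^ a * (M - lam • 1) ^ a := by
        rw [hMl.mul_pow, (hMl.pow_pow a a).eq]
      rw [hswap, Module.End.mul_apply, ha, map_zero]
    · rw [_root_.smul_pow, LinearMap.smul_apply, hb, smul_zero]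
  · rw [Module.End.mem_maxGenEigenspace]
    refine ⟨a + b, ?_⟩
    have id2 : M + N - (lam + mu) • (1 : Module.End K V)
        = (M - lam • 1) + (N - mu • 1) := by module
    rw [id2]
    exact aux_add_pow hNm ha hb

end helpers

section main

variable {K V : Type*} [Field K] [AddCommGroup V] [Module K V]

lemma aux_main (M N : Module.End K V) (hcomm : M * N = N * M) (lam mu : K) :
    (M.maxGenEigenspace lam ⊓ N.maxGenEigenspace mu) ⊔
      (M.maxGenEigenspace mu ⊓ N.maxGenEigenspace lam) =
      (M * N).maxGenEigenspace (lam * mu) ⊓ (M + N).maxGenEigenspace (lam + mu) := by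
  have hMN : Commute M N := hcomm
  apply le_antisymm
  · refine sup_le (aux_easy M N hcomm lam mu) ?_
    have h2 := aux_easy N M hMN.symm.eq lam mu
    rwa [inf_comm, ← hcomm, add_comm N M] at h2
  · intro x hx
    obtain ⟨hxP, hxS⟩ := Submodule.mem_inf.mp hx
    rw [Module.End.mem_maxGenEigenspace] at hxP hxS
    obtain ⟨p, hp⟩ := hxP
    obtain ⟨s, hs⟩ := hxS
    set S : Module.End K V := M + N - (lam + mu) • 1 with hSdef
    set P : Module.End K V := M * N - (lam * mu) • 1 with hPdef
    have hSM : Commute S M :=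
      ((Commute.refl M).add_left hMN.symm).sub_left ((Commute.one_left M).smul_left _)
    have hPM : Commute P M :=
      ((Commute.refl M).mul_left hMN.symm).sub_left ((Commute.one_left M).smul_left _)
    have hSN : Commute S N :=
      (hMN.add_left (Commute.refl N)).sub_left ((Commute.one_left N).smul_left _)
    have hSP : Commute S P :=
      (hSM.mul_right hSN).sub_right ((Commute.one_right S).smul_right _)
    have hSMP : Commute (S * M) P := Commute.mul_left hSP hPM.symm
    have hkey : (M - lam • 1) * (M - mu • 1) = S * M + (-P) := by
      rw [hSdef, hPdef]
      simp only [sub_mul, mul_sub, add_mul, smul_mul_assoc, mul_smul_comm, one_mul, mul_one,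
        smul_smul, smul_sub, smul_add]
      rw [hcomm]
      module
    have hSMx : ((S * M) ^ s) x = 0 := by
      rw [hSM.mul_pow, (hSM.pow_pow s s).eq, Module.End.mul_apply, hs, map_zero]
    have hnPx : ((-P) ^ p) x = 0 := by
      rw [neg_pow, Module.End.mul_apply, hp, map_zero]
    have hDx : (((M - lam • 1) * (M - mu • 1)) ^ (s + p)) x = 0 := by
      rw [hkey]; exact aux_add_pow hSMP.neg_right hSMx hnPx
    have hDcomm : Commute (M - lam • 1) (M - mu • 1) :=
      ((Commute.refl M).sub_left ((Commute.one_left M).smul_left lam)).sub_right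
        ((Commute.one_right _).smul_right mu)
    have hSMl : Commute S (M - lam • 1) := hSM.sub_right ((Commute.one_right S).smul_right lam)
    have hSMm : Commute S (M - mu • 1) := hSM.sub_right ((Commute.one_right S).smul_right mu)
    by_cases hlm : lam = mu
    · subst hlm
      have hMx : ((M - lam • 1) ^ (2 * (s + p))) x = 0 := by
        rw [pow_mul]
        have : (M - lam • (1 : Module.End K V)) ^ 2 = (M - lam • 1) * (M - lam • 1) := sq _
        rw [this]
        exact hDx
      have hNx : ((N - lam • 1) ^ (s + 2 * (s + p))) x = 0 := by
        have id4 : N - lam • (1 : Module.End K V) = S + (-(M - lam • 1)) := by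
          rw [hSdef]; module
        have hneg : ((-(M - lam • 1)) ^ (2 * (s + p))) x = 0 := by
          rw [neg_pow, Module.End.mul_apply, hMx, map_zero]
        rw [id4]
        exact aux_add_pow hSMl.neg_right hs hneg
      exact Submodule.mem_sup_left (Submodule.mem_inf.mpr
        ⟨(M.mem_maxGenEigenspace lam x).mpr ⟨_, hMx⟩,
         (N.mem_maxGenEigenspace lam x).mpr ⟨_, hNx⟩⟩)
    · set K0 := s + p with hK0
      have hco : IsCoprime ((X - C lam) ^ K0) ((X - C mu) ^ K0) :=
        (isCoprime_X_sub_C_of_isUnit_sub ((sub_ne_zero_of_ne hlm).isUnit)).pow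
      obtain ⟨u, v, huv⟩ := hco
      have haev : (aeval M u) * (M - lam • 1) ^ K0 + (aeval M v) * (M - mu • 1) ^ K0
          = (1 : Module.End K V) := by
        have h := congrArg (aeval M) huv
        simpa [map_add, map_mul, map_pow, map_sub, aeval_X, aeval_C,
          Module.algebraMap_end_eq_smul_id, Module.End.one_eq_id] using h
      set y := ((aeval M v) * (M - mu • 1) ^ K0) x with hy_def
      set z := ((aeval M u) * (M - lam • 1) ^ K0) x with hz_def
      have hyz : y + z = x := by
        have h := congrArg (fun f : Module.End K V => f x) haev
        simp only [LinearMap.add_apply, Module.End.one_apply] at h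
        rw [hy_def, hz_def, add_comm]
        exact h
      have hMlM : Commute (M - lam • 1) M :=
        (Commute.refl M).sub_left ((Commute.one_left M).smul_left lam)
      have hMmM : Commute (M - mu • 1) M :=
        (Commute.refl M).sub_left ((Commute.one_left M).smul_left mu)
      -- y ∈ G_lam(M) ⊓ G_mu(N)
      have hMlam_y : (((M - lam • 1)) ^ K0) y = 0 := by
        have hc : Commute ((M - lam • 1) ^ K0) (aeval M v) :=
          aux_commute_aeval (hMlM.pow_left K0) v
        have hprod : (M - lam • 1) ^ K0 * ((aeval M v) * (M - mu • 1) ^ K0)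
            = (aeval M v) * (((M - lam • 1) * (M - mu • 1)) ^ K0) := by
          rw [← mul_assoc, hc.eq, mul_assoc, ← hDcomm.mul_pow]
        rw [hy_def, ← Module.End.mul_apply, hprod, Module.End.mul_apply, hDx, map_zero]
      have hS_y : (S ^ s) y = 0 := by
        have hc2 : Commute (S ^ s) ((aeval M v) * (M - mu • 1) ^ K0) :=
          ((aux_commute_aeval hSM v).mul_right (hSMm.pow_right K0)).pow_left s
        rw [hy_def, ← Module.End.mul_apply, hc2.eq, Module.End.mul_apply, hs, map_zero]
      have hN_y : ((N - mu • 1) ^ (s + K0)) y = 0 := by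
        have id4 : N - mu • (1 : Module.End K V) = S + (-(M - lam • 1)) := by
          rw [hSdef]; module
        have hneg : ((-(M - lam • 1)) ^ K0) y = 0 := by
          rw [neg_pow, Module.End.mul_apply, hMlam_y, map_zero]
        rw [id4]
        exact aux_add_pow hSMl.neg_right hS_y hneg
      have hy : y ∈ M.maxGenEigenspace lam ⊓ N.maxGenEigenspace mu :=
        Submodule.mem_inf.mpr
          ⟨(M.mem_maxGenEigenspace lam y).mpr ⟨_, hMlam_y⟩,
           (N.mem_maxGenEigenspace mu y).mpr ⟨_, hN_y⟩⟩
      -- z ∈ G_mu(M) ⊓ G_lam(N)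
      have hDx2 : (((M - mu • 1) * (M - lam • 1)) ^ K0) x = 0 := by
        rw [← hDcomm.eq]; exact hDx
      have hMmu_z : (((M - mu • 1)) ^ K0) z = 0 := by
        have hc : Commute ((M - mu • 1) ^ K0) (aeval M u) :=
          aux_commute_aeval (hMmM.pow_left K0) u
        have hprod : (M - mu • 1) ^ K0 * ((aeval M u) * (M - lam • 1) ^ K0)
            = (aeval M u) * (((M - mu • 1) * (M - lam • 1)) ^ K0) := by
          rw [← mul_assoc, hc.eq, mul_assoc, ← hDcomm.symm.mul_pow]
        rw [hz_def, ← Module.End.mul_apply, hprod, Module.End.mul_apply, hDx2, map_zero]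
      have hS_z : (S ^ s) z = 0 := by
        have hc2 : Commute (S ^ s) ((aeval M u) * (M - lam • 1) ^ K0) :=
          ((aux_commute_aeval hSM u).mul_right (hSMl.pow_right K0)).pow_left s
        rw [hz_def, ← Module.End.mul_apply, hc2.eq, Module.End.mul_apply, hs, map_zero]
      have hN_z : ((N - lam • 1) ^ (s + K0)) z = 0 := by
        have id5 : N - lam • (1 : Module.End K V) = S + (-(M - mu • 1)) := by
          rw [hSdef]; module
        have hneg : ((-(M - mu • 1)) ^ K0) z = 0 := by
          rw [neg_pow, Module.End.mul_apply, hMmu_z, map_zero]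
        rw [id5]
        exact aux_add_pow hSMm.neg_right hS_z hneg
      have hz : z ∈ M.maxGenEigenspace mu ⊓ N.maxGenEigenspace lam :=
        Submodule.mem_inf.mpr
          ⟨(M.mem_maxGenEigenspace mu z).mpr ⟨_, hMmu_z⟩,
           (N.mem_maxGenEigenspace lam z).mpr ⟨_, hN_z⟩⟩
      rw [← hyz]
      exact Submodule.add_mem_sup hy hz

end main

theorem stmt_13 {K V : Type*} [Field K] [AddCommGroup V] [Module K V]
    [FiniteDimensional K V]
    (M N : Module.End K V) (hcomm : M * N = N * M) (lam mu : K) :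
    let G : Module.End K V → K → Submodule K V :=
      fun T ν => LinearMap.ker ((T - ν • 1) ^ (Module.finrank K V))
    (G M lam ⊓ G N mu) ⊔ (G M mu ⊓ G N lam) =
      G (M * N) (lam * mu) ⊓ G (M + N) (lam + mu) := by
  intro G
  have hG : ∀ (T : Module.End K V) (ν : K), G T ν = Module.End.maxGenEigenspace T ν :=
    fun T ν =>
      ((Module.End.maxGenEigenspace_eq_genEigenspace_finrank T ν).trans
        Module.End.genEigenspace_nat).symm
  rw [hG, hG, hG, hG, hG, hG]
  exact aux_main M N hcomm lam mu
end

section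
/- Let V be a finite-dimensional vector space over a field K, M, N commuting endomorphisms of V, and λ, μ ∈ K. Then G_λ(M) ∩ G_μ(N) ⊆ G_{λμ}(MN) ∩ G_{λ+μ}(M+N), where G_ν(T) = ker(T − νE)^{dim V}. -/
private lemma add_pow_apply {K V : Type*} [Field K] [AddCommGroup V] [Module K V]
    (A B : Module.End K V) (hc : Commute A B) (n : ℕ) (x : V)
    (ha : (A ^ n) x = 0) (hb : (B ^ n) x = 0) : ((A + B) ^ (2 * n)) x = 0 := by
  rw [hc.add_pow]
  simp only [LinearMap.coe_sum, Finset.sum_apply]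
  apply Finset.sum_eq_zero
  intro i hi
  simp only [Finset.mem_range, Nat.lt_succ_iff] at hi
  rcases le_or_gt n i with h | h
  · obtain ⟨j, rfl⟩ := Nat.exists_eq_add_of_le h
    have hcomm' : A ^ (n + j) * (B ^ (2 * n - (n + j)) * ((2 * n).choose (n + j) : Module.End K V))
        = B ^ (2 * n - (n + j)) * ((2 * n).choose (n + j) : Module.End K V) * A ^ (n + j) := by
      exact ((hc.pow_pow _ _).mul_right (Nat.commute_cast _ _)).eq
    rw [mul_assoc, hcomm', add_comm n j, pow_add]
    simp [Module.End.mul_apply, ha]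
  · have h2 : 2 * n - i = (n - i) + n := by omega
    rw [h2, pow_add]
    simp [Module.End.mul_apply, hb]

theorem stmt_14 {K V : Type*} [Field K] [AddCommGroup V] [Module K V]
    [FiniteDimensional K V]
    (M N : Module.End K V) (hcomm : M * N = N * M) (lam mu : K) :
    let G : Module.End K V → K → Submodule K V :=
      fun T ν => LinearMap.ker ((T - ν • 1) ^ (Module.finrank K V))
    G M lam ⊓ G N mu ≤ G (M * N) (lam * mu) ⊓ G (M + N) (lam + mu) := by
  intro G x hx
  set n := Module.finrank K V with hn
  obtain ⟨hxM, hxN⟩ := hx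
  have hxM : ((M - lam • 1) ^ n) x = 0 := hxM
  have hxN : ((N - mu • 1) ^ n) x = 0 := hxN
  set A := M - lam • (1 : Module.End K V) with hA
  set B := N - mu • (1 : Module.End K V) with hB
  have hAB : Commute A B := by
    simp only [hA, hB]
    apply Commute.sub_left
    · apply Commute.sub_right
      · exact hcomm
      · exact (Commute.one_right M).smul_right mu
    · apply Commute.sub_right
      · exact ((Commute.one_left N).smul_left lam)
      · exact ((Commute.one_right 1).smul_left lam).smul_right mu
  have hAN : Commute A N := by
    simp only [hA]
    exact (Commute.sub_left hcomm ((Commute.one_left N).smul_left lam))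
  have key : ∀ C : Module.End K V, ((C ^ n) x = 0) → x ∈ LinearMap.ker (C ^ n) := fun C h => h
  have drop : ∀ C : Module.End K V, ((C ^ (2 * n)) x = 0) → ((C ^ n) x = 0) := by
    intro C h
    have := Module.End.ker_pow_eq_ker_pow_finrank_of_le (f := C) (m := 2 * n)
      (by omega)
    rw [← hn] at this
    have hmem : x ∈ LinearMap.ker (C ^ (2 * n)) := h
    rw [this] at hmem
    exact hmem
  constructor
  · -- product case: M*N - (lam*mu)•1 = A*N + lam•B
    show ((M * N - (lam * mu) • 1) ^ n) x = 0
    have hid : M * N - (lam * mu) • (1 : Module.End K V) = A * N + lam • B := by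
      simp only [hA, hB, sub_mul, smul_sub, smul_mul_assoc, one_mul, smul_smul]
      abel
    rw [hid]
    apply drop
    apply add_pow_apply
    · have hNB : Commute N B := (Commute.refl N).sub_right ((Commute.one_right N).smul_right mu)
      exact (hAB.mul_left hNB).smul_right lam
    · have : (A * N) ^ n = N ^ n * A ^ n := by
        rw [hAN.eq, (hAN.symm).mul_pow]
      rw [this]
      simp [Module.End.mul_apply, hxM]
    · rw [smul_pow]
      simp [hxN]
  · -- sum case: M + N - (lam+mu)•1 = A + B
    show (((M + N) - (lam + mu) • 1) ^ n) x = 0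
    have hid : M + N - (lam + mu) • (1 : Module.End K V) = A + B := by
      simp only [hA, hB, add_smul]
      abel
    rw [hid]
    exact drop _ (add_pow_apply A B hAB n x hxM hxN)
end

section
/- Let V be a finite-dimensional vector space over a field K and M, N endomorphisms of V. If the characteristic polynomial (in t) of the endomorphism (M − sE)(N − sE) of V ⊗_K K(s) vanishes at t = (λ − s)(μ − s) for some λ, μ ∈ K, then λμ is an eigenvalue of MN and of NM, and λ + μ is an eigenvalue of M + N. If moreover M and N have the same characteristic polynomial, then λ and μ are eigenvalues of both M and N. -/
open Polynomial Matrix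

-- eval of charpoly as determinant
theorem aux_eval_charpoly {R : Type*} [CommRing R] {ι : Type*} [Fintype ι] [DecidableEq ι]
    (A : Matrix ι ι R) (c : R) : A.charpoly.eval c = (c • (1 : Matrix ι ι R) - A).det := by
  rw [Matrix.charpoly, ← Polynomial.coe_evalRingHom, RingHom.map_det]
  congr 1
  ext i j
  by_cases h : i = j <;> simp [Matrix.charmatrix_apply, h, Matrix.one_apply, Matrix.diagonal_apply]

theorem aux_key_id {S ι : Type*} [CommRing S] [Fintype ι] [DecidableEq ι]
    (a b : Matrix ι ι S) (p q x : S) :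
    ((p - x)*(q - x)) • (1 : Matrix ι ι S) - (a - x•1)*(b - x•1)
    = ((p*q) • (1 : Matrix ι ι S) - a*b) - x • ((p+q) • (1 : Matrix ι ι S) - (a + b)) := by
  ext i j
  by_cases h : i = j <;>
  simp [h, Matrix.mul_apply, Matrix.one_apply, sub_mul, mul_sub, Finset.sum_sub_distrib,
    mul_ite, ite_mul, Finset.sum_ite_eq, Finset.sum_ite_eq'] <;> ring

theorem aux_lam_id {S ι : Type*} [CommRing S] [Fintype ι] [DecidableEq ι]
    (a b : Matrix ι ι S) (p q : S) :
    ((p*q) • (1 : Matrix ι ι S) - a*b) - p • ((p+q) • (1 : Matrix ι ι S) - (a + b))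
    = -((a - p•1)*(b - p•1)) := by
  ext i j
  by_cases h : i = j <;>
  simp [h, Matrix.mul_apply, Matrix.one_apply, sub_mul, mul_sub, Finset.sum_sub_distrib,
    mul_ite, ite_mul, Finset.sum_ite_eq, Finset.sum_ite_eq'] <;> ring

-- mapping the polynomial matrix P - X•Q by a ring hom
theorem aux_D_map {K S ι : Type*} [CommRing K] [CommRing S] [Fintype ι] [DecidableEq ι]
    (ψ : K[X] →+* S) (A B : Matrix ι ι K) (lam mu : K) :
    ((((C lam * C mu) • (1 : Matrix ι ι K[X]) - (A.map C)*(B.map C)) -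
      (X : K[X]) • ((C lam + C mu) • (1 : Matrix ι ι K[X]) - (A.map C + B.map C))).map ψ)
    = ((ψ (C lam) * ψ (C mu)) • (1 : Matrix ι ι S) - (A.map (ψ ∘ C))*(B.map (ψ ∘ C))) -
      ψ X • ((ψ (C lam) + ψ (C mu)) • (1 : Matrix ι ι S) - (A.map (ψ ∘ C) + B.map (ψ ∘ C))) := by
  ext i j
  by_cases h : i = j <;>
  simp [h, Matrix.mul_apply, Matrix.one_apply, map_sub, _root_.map_mul, map_add, map_sum,
    mul_ite, ite_mul, Finset.sum_ite_eq, Finset.sum_ite_eq']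

theorem aux_D2_map {K S ι : Type*} [CommRing K] [CommRing S] [Fintype ι] [DecidableEq ι]
    (ψ : K[X] →+* S) (A B : Matrix ι ι K) (lam mu : K) :
    (((X : K[X]) • ((C lam * C mu) • (1 : Matrix ι ι K[X]) - (A.map C)*(B.map C)) -
      ((C lam + C mu) • (1 : Matrix ι ι K[X]) - (A.map C + B.map C))).map ψ)
    = ψ X • ((ψ (C lam) * ψ (C mu)) • (1 : Matrix ι ι S) - (A.map (ψ ∘ C))*(B.map (ψ ∘ C))) -
      ((ψ (C lam) + ψ (C mu)) • (1 : Matrix ι ι S) - (A.map (ψ ∘ C) + B.map (ψ ∘ C))) := by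
  ext i j
  by_cases h : i = j <;>
  simp [h, Matrix.mul_apply, Matrix.one_apply, map_sub, _root_.map_mul, map_add, map_sum,
    mul_ite, ite_mul, Finset.sum_ite_eq, Finset.sum_ite_eq']

open Polynomial Matrix LinearMap Module Module.Free
open scoped TensorProduct

set_option maxHeartbeats 2000000 in
set_option synthInstance.maxHeartbeats 400000 in
theorem stmt_16 {K V : Type*} [Field K] [AddCommGroup V] [Module K V]
    [FiniteDimensional K V]
    (M N : Module.End K V) (lam mu : K)
    (hroot :
      (((LinearMap.baseChange (RatFunc K) M - (RatFunc.X : RatFunc K) • 1) *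
        (LinearMap.baseChange (RatFunc K) N - (RatFunc.X : RatFunc K) • 1)).charpoly).eval
        ((algebraMap K (RatFunc K) lam - RatFunc.X) *
         (algebraMap K (RatFunc K) mu - RatFunc.X)) = 0) :
    ((M * N).charpoly.eval (lam * mu) = 0 ∧
     (N * M).charpoly.eval (lam * mu) = 0 ∧
     (M + N).charpoly.eval (lam + mu) = 0) ∧
    (M.charpoly = N.charpoly →
      M.charpoly.eval lam = 0 ∧ M.charpoly.eval mu = 0 ∧
      N.charpoly.eval lam = 0 ∧ N.charpoly.eval mu = 0) := by
  classical
  let b : Basis (ChooseBasisIndex K V) K V := chooseBasis K V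
  let b' : Basis (ChooseBasisIndex K V) (RatFunc K) (RatFunc K ⊗[K] V) :=
    Algebra.TensorProduct.basis (RatFunc K) b
  let A : Matrix (ChooseBasisIndex K V) (ChooseBasisIndex K V) K := toMatrix b b M
  let B : Matrix (ChooseBasisIndex K V) (ChooseBasisIndex K V) K := toMatrix b b N
  let n : ℕ := Fintype.card (ChooseBasisIndex K V)
  let u : RatFunc K := RatFunc.X
  let f : K →+* RatFunc K := algebraMap K (RatFunc K)
  -- translate hroot to matrices
  have h1 : toMatrix b' b' ((LinearMap.baseChange (RatFunc K) M - (RatFunc.X : RatFunc K) • 1) *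
      (LinearMap.baseChange (RatFunc K) N - (RatFunc.X : RatFunc K) • 1)) =
      (A.map f - u • 1) * (B.map f - u • 1) := by
    rw [LinearMap.toMatrix_mul]
    congr 1 <;> rw [map_sub, _root_.map_smul, LinearMap.toMatrix_one, LinearMap.toMatrix_baseChange]
  have h2 : (((A.map f - u • 1) * (B.map f - u • 1)).charpoly).eval
      ((f lam - u) * (f mu - u)) = 0 := by
    rw [← h1, LinearMap.charpoly_toMatrix]; exact hroot
  have hdet : ((f lam * f mu) • (1 : Matrix _ _ (RatFunc K)) - (A.map f)*(B.map f) -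
      u • ((f lam + f mu) • (1 : Matrix _ _ (RatFunc K)) - (A.map f + B.map f))).det = 0 := by
    rw [← aux_key_id]
    rw [aux_eval_charpoly] at h2
    exact h2
  -- transcendence
  have hX : Transcendental K u := by
    rw [show u = algebraMap K[X] (RatFunc K) X from (RatFunc.algebraMap_X).symm]
    exact (transcendental_algebraMap_iff (RatFunc.algebraMap_injective K)).2
      (Polynomial.transcendental_X K)
  have hXinj : Function.Injective (aeval u : K[X] →ₐ[K] RatFunc K) :=
    transcendental_iff_injective.mp hX
  have hcomp : ((aeval u : K[X] →ₐ[K] RatFunc K) : K[X] →+* RatFunc K) ∘ (C : K →+* K[X]) = f := by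
    funext a; simp [f]
  -- the polynomial determinant d
  set D1 : Matrix (ChooseBasisIndex K V) (ChooseBasisIndex K V) K[X] :=
    ((C lam * C mu) • (1 : Matrix _ _ K[X]) - (A.map C)*(B.map C)) -
      (X : K[X]) • ((C lam + C mu) • (1 : Matrix _ _ K[X]) - (A.map C + B.map C)) with hD1
  have hd1 : D1.det = 0 := by
    apply hXinj
    rw [map_zero]
    show ((aeval u : K[X] →ₐ[K] RatFunc K) : K[X] →+* RatFunc K) D1.det = 0
    rw [RingHom.map_det, RingHom.mapMatrix_apply, hD1, aux_D_map, hcomp]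
    simpa [f, u] using hdet
  -- evaluations over K
  have hPQ : ∀ s : K, (((lam * mu) • (1 : Matrix _ _ K) - A*B) -
      s • ((lam + mu) • (1 : Matrix _ _ K) - (A + B))).det = 0 := by
    intro s
    have := congrArg (evalRingHom s) hd1
    rw [map_zero, RingHom.map_det, RingHom.mapMatrix_apply, hD1, aux_D_map] at this
    have hcomp2 : ⇑(evalRingHom s) ∘ ⇑(C : K →+* K[X]) = (_root_.id : K → K) := by funext a; simp
    rw [hcomp2] at this
    simpa using this
  have hn1 : ((-1:K)^n) ≠ 0 := pow_ne_zero _ (by norm_num)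
  have hevalneg : ∀ (Z : Matrix (ChooseBasisIndex K V) (ChooseBasisIndex K V) K) (s : K),
      Z.charpoly.eval s = (-1)^n * (Z - s•1).det := by
    intro Z s
    rw [aux_eval_charpoly, show s • (1 : Matrix (ChooseBasisIndex K V) (ChooseBasisIndex K V) K) - Z
      = -(Z - s•1) by rw [neg_sub], det_neg]
  have hdetP : ((lam*mu) • (1 : Matrix _ _ K) - A*B).det = 0 := by simpa using hPQ 0
  -- MN
  have hMN : (M*N).charpoly.eval (lam*mu) = 0 := by
    rw [← LinearMap.charpoly_toMatrix (M*N) b, LinearMap.toMatrix_mul, aux_eval_charpoly]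
    exact hdetP
  -- NM
  have hdetP' : ((lam*mu) • (1 : Matrix _ _ K) - B*A).det = 0 := by
    by_cases hc : lam*mu = 0
    · have h0 : A.det * B.det = 0 := by
        have hz := hdetP
        rw [hc, zero_smul, zero_sub, det_neg, det_mul] at hz
        rcases mul_eq_zero.mp hz with h | h
        · exact absurd h hn1
        · exact h
      rw [hc, zero_smul, zero_sub, det_neg, det_mul, mul_comm B.det, h0, mul_zero]
    · have h1' : ((1 : Matrix _ _ K) - ((lam*mu)⁻¹ • A) * B).det = 0 := by
        have he : (lam*mu) • ((1 : Matrix _ _ K) - ((lam*mu)⁻¹ • A) * B)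
            = (lam*mu) • (1 : Matrix _ _ K) - A*B := by
          rw [smul_sub, smul_mul_assoc, smul_smul, mul_inv_cancel₀ hc, one_smul]
        have hz := hdetP
        rw [← he, Matrix.det_smul] at hz
        rcases mul_eq_zero.mp hz with h | h
        · exact absurd h (pow_ne_zero _ hc)
        · exact h
      have h2' : ((1 : Matrix _ _ K) - B * ((lam*mu)⁻¹ • A)).det = 0 := by
        rw [← det_one_sub_mul_comm]; exact h1'
      have he : (lam*mu) • ((1 : Matrix _ _ K) - B * ((lam*mu)⁻¹ • A))
          = (lam*mu) • (1 : Matrix _ _ K) - B*A := by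
        rw [smul_sub, mul_smul_comm, smul_smul, mul_inv_cancel₀ hc, one_smul]
      rw [← he, Matrix.det_smul, h2', mul_zero]
  have hNM : (N*M).charpoly.eval (lam*mu) = 0 := by
    rw [← LinearMap.charpoly_toMatrix (N*M) b, LinearMap.toMatrix_mul, aux_eval_charpoly]
    exact hdetP'
  -- M + N
  have hXinv : Transcendental K (u⁻¹) := fun h => hX (IsAlgebraic.inv_iff.mp h)
  set D2 : Matrix (ChooseBasisIndex K V) (ChooseBasisIndex K V) K[X] :=
    (X : K[X]) • ((C lam * C mu) • (1 : Matrix _ _ K[X]) - (A.map C)*(B.map C)) -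
      ((C lam + C mu) • (1 : Matrix _ _ K[X]) - (A.map C + B.map C)) with hD2
  have hd2 : D2.det = 0 := by
    apply transcendental_iff_injective.mp hXinv
    rw [map_zero]
    show ((aeval u⁻¹ : K[X] →ₐ[K] RatFunc K) : K[X] →+* RatFunc K) D2.det = 0
    rw [RingHom.map_det, RingHom.mapMatrix_apply, hD2, aux_D2_map]
    have hcomp3 : ⇑((aeval u⁻¹ : K[X] →ₐ[K] RatFunc K) : K[X] →+* RatFunc K) ∘ ⇑(C : K →+* K[X])
        = ⇑f := by funext a; simp [f]
    rw [hcomp3]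
    have he : u⁻¹ • (((f lam * f mu) • (1 : Matrix _ _ (RatFunc K)) - A.map f * B.map f) -
        u • ((f lam + f mu) • (1 : Matrix _ _ (RatFunc K)) - (A.map f + B.map f)))
        = u⁻¹ • ((f lam * f mu) • (1 : Matrix _ _ (RatFunc K)) - A.map f * B.map f) -
          ((f lam + f mu) • (1 : Matrix _ _ (RatFunc K)) - (A.map f + B.map f)) := by
      rw [smul_sub, smul_smul, inv_mul_cancel₀ (RatFunc.X_ne_zero (K := K)), one_smul]
    have hz : (u⁻¹ • ((f lam * f mu) • (1 : Matrix _ _ (RatFunc K)) - A.map f * B.map f) -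
        ((f lam + f mu) • (1 : Matrix _ _ (RatFunc K)) - (A.map f + B.map f))).det = 0 := by
      rw [← he, Matrix.det_smul, hdet, mul_zero]
    simpa [u, f] using hz
  have hdetQ : ((lam+mu) • (1 : Matrix _ _ K) - (A+B)).det = 0 := by
    have := congrArg (evalRingHom (0:K)) hd2
    rw [map_zero, RingHom.map_det, RingHom.mapMatrix_apply, hD2, aux_D2_map] at this
    have hcomp2 : ⇑(evalRingHom (0:K)) ∘ ⇑(C : K →+* K[X]) = (_root_.id : K → K) := by funext a; simp
    rw [hcomp2] at this
    simp at this
    rw [show (lam+mu) • (1 : Matrix (ChooseBasisIndex K V) (ChooseBasisIndex K V) K) - (A+B)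
      = -((A+B) - (lam+mu) • 1) from (neg_sub _ _).symm, det_neg]
    rw [this, mul_zero]
  have hMplusN : (M+N).charpoly.eval (lam+mu) = 0 := by
    rw [← LinearMap.charpoly_toMatrix (M+N) b, map_add, aux_eval_charpoly]
    exact hdetQ
  refine ⟨⟨hMN, hNM, hMplusN⟩, ?_⟩
  -- part 2
  intro hcp
  have hABcp : A.charpoly = B.charpoly := by
    have h1' : A.charpoly = M.charpoly := LinearMap.charpoly_toMatrix M b
    have h2' : B.charpoly = N.charpoly := LinearMap.charpoly_toMatrix N b
    rw [h1', h2', hcp]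
  have hlamprod : (A - lam•1).det * (B - lam•1).det = 0 := by
    have h := hPQ lam
    rw [aux_lam_id A B lam mu, det_neg, det_mul] at h
    rcases mul_eq_zero.mp h with h' | h'
    · exact absurd h' hn1
    · exact h'
  have hmuprod : (A - mu•1).det * (B - mu•1).det = 0 := by
    have h := hPQ mu
    rw [mul_comm lam mu, add_comm lam mu, aux_lam_id A B mu lam, det_neg, det_mul] at h
    rcases mul_eq_zero.mp h with h' | h'
    · exact absurd h' hn1
    · exact h'
  have keyA : ∀ s : K, (A - s•1).det * (B - s•1).det = 0 →
      A.charpoly.eval s = 0 ∧ B.charpoly.eval s = 0 := by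
    intro s hs
    have hev : A.charpoly.eval s * B.charpoly.eval s = 0 := by
      rw [hevalneg A s, hevalneg B s]
      rw [show ((-1:K)^n * (A - s•1).det) * ((-1:K)^n * (B - s•1).det)
        = ((-1:K)^n * (-1:K)^n) * ((A - s•1).det * (B - s•1).det) by ring, hs, mul_zero]
    have hsame : A.charpoly.eval s = B.charpoly.eval s := by rw [hABcp]
    have h0 : B.charpoly.eval s = 0 := by
      rw [hsame] at hev
      exact mul_self_eq_zero.mp hev
    exact ⟨by rw [hsame]; exact h0, h0⟩
  obtain ⟨hA1, hB1⟩ := keyA lam hlamprod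
  obtain ⟨hA2, hB2⟩ := keyA mu hmuprod
  have eM : M.charpoly = A.charpoly := (LinearMap.charpoly_toMatrix M b).symm
  have eN : N.charpoly = B.charpoly := (LinearMap.charpoly_toMatrix N b).symm
  exact ⟨by rw [eM]; exact hA1, by rw [eM]; exact hA2, by rw [eN]; exact hB1, by rw [eN]; exact hB2⟩
end

section
/- Let V be a finite-dimensional vector space, M, N commuting endomorphisms of V, and λ, μ elements of the base field K. Then (λ − s)(μ − s) is an eigenvalue of the endomorphism (M − sE)(N − sE) of V ⊗_K K(s) if and only if (E_λ(M) ∩ E_μ(N)) + (E_μ(M) ∩ E_λ(N)) ≠ {0}, where E_ν(T) = ker(T − νE). -/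
/-!
Expanding both sides, `(M - s)(N - s) - (λ - s)(μ - s) = A - s B` with `A = MN - λμ` and
`B = M + N - (λ + μ)`, two commuting endomorphisms of `V`. So the eigenvalue condition says that
`A - s B` is not injective over `K(s)`. Since `K(s)` is a localization of `K[s]`, it is then
already not injective on `K[s] ⊗ V = V[s]`, which gives a nonzero polynomial `∑ vₖ sᵏ` with
`A v₀ = 0` and `A vₖ₊₁ = B vₖ`. Hence `Bᵗ vₖ = Aᵗ vₖ₊ₜ`, so for the first nonzero coefficient
`v`, `A v = 0` and `B` is nilpotent on `v`; as `ker A` is `B`-stable, `ker A ∩ ker B ≠ 0`.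
Finally, for `u ∈ ker A ∩ ker B` the vector `(M - μ) u` lies in `E_λ(M) ∩ E_μ(N)`, and if it
vanishes then `u ∈ E_μ(M) ∩ E_λ(N)`.
-/

open scoped TensorProduct
open Polynomial

theorem IsLocalizedModule.injective_of_comp_eq_comp {R M M' : Type*} [CommRing R]
    [AddCommGroup M] [AddCommGroup M'] [Module R M] [Module R M'] (S : Submonoid R)
    (f : M →ₗ[R] M') [IsLocalizedModule S f] {T : M →ₗ[R] M} {T' : M' →ₗ[R] M'}
    (hT : T' ∘ₗ f = f ∘ₗ T) (hinj : Function.Injective T) : Function.Injective T' := by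
  have hmap : IsLocalizedModule.map S f f T = T' :=
    IsLocalizedModule.ext S f (IsLocalizedModule.map_units f)
      (by rw [IsLocalizedModule.map_comp, hT])
  exact hmap ▸ IsLocalizedModule.map_injective S f f T hinj

section CommRing

variable {R W : Type*} [CommRing R] [AddCommGroup W] [Module R W]

theorem Module.End.ker_inf_ker_ne_bot_of_pow_apply_eq_zero {A B : Module.End R W}
    (hAB : Commute A B) {x : W} (hx : x ≠ 0) (hA : A x = 0) {n : ℕ} (hB : (B ^ n) x = 0) :
    LinearMap.ker A ⊓ LinearMap.ker B ≠ ⊥ := by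
  induction n generalizing x with
  | zero => exact absurd hB hx
  | succ n ih =>
    by_cases hBx : B x = 0
    · exact (Submodule.ne_bot_iff _).mpr ⟨x, ⟨hA, hBx⟩, hx⟩
    · refine ih hBx ?_ hB
      rw [← Module.End.mul_apply, hAB.eq, Module.End.mul_apply, hA, map_zero]

theorem Module.End.ker_inf_ker_ne_bot_of_chain {A B : Module.End R W}
    (hAB : Commute A B) {v : ℕ →₀ W} (hv : v ≠ 0) (h0 : A (v 0) = 0)
    (hsucc : ∀ k, A (v (k + 1)) = B (v k)) :
    LinearMap.ker A ⊓ LinearMap.ker B ≠ ⊥ := by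
  classical
  have hex : ∃ k, v k ≠ 0 := by simpa [Finsupp.ext_iff] using hv
  set k₀ := Nat.find hex
  have hA : A (v k₀) = 0 := by
    rcases h : k₀ with _ | k
    · exact h0
    · rw [hsucc, not_not.mp (Nat.find_min hex (show k < k₀ by omega)), map_zero]
  have hBA : ∀ t k, (B ^ t) (v k) = (A ^ t) (v (k + t)) := by
    intro t
    induction t with
    | zero => simp
    | succ t ih =>
      intro k
      rw [pow_succ, Module.End.mul_apply, ← hsucc, ← Module.End.mul_apply,
        ← (hAB.pow_right t).eq, Module.End.mul_apply, ih, pow_succ', Module.End.mul_apply,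
        add_right_comm, add_assoc]
  set n := v.support.sup id + 1
  have hvn : v (k₀ + n) = 0 :=
    Finsupp.notMem_support_iff.mp fun h => by
      have := Finset.le_sup (f := id) h
      simp only [id] at this
      omega
  exact ker_inf_ker_ne_bot_of_pow_apply_eq_zero hAB (Nat.find_spec hex) hA
    (n := n) (by rw [hBA, hvn, map_zero])

theorem PolynomialModule.ker_inf_ker_ne_bot {A B : Module.End R W}
    (hAB : Commute A B) {q : PolynomialModule R W} (hq : q ≠ 0)
    (h : map R A q = (X : R[X]) • map R B q) :
    LinearMap.ker A ⊓ LinearMap.ker B ≠ ⊥ := by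
  have hcoeff n : A (q.coeff n) = ((X : R[X]) • map R B q).coeff n := by
    rw [← h]
    simp [PolynomialModule.map]
  refine Module.End.ker_inf_ker_ne_bot_of_chain hAB (v := q.coeff)
    (fun h0 => hq (coeff_injective h0)) ?_ fun k => ?_
  · simp [hcoeff, ← monomial_one_one_eq_X]
  · simp [hcoeff, ← monomial_one_one_eq_X, PolynomialModule.map]

theorem PolynomialModule.polynomialTensorProductLEquivPolynomialModule_baseChange
    (f : Module.End R W) (m : R[X] ⊗[R] W) :
    polynomialTensorProductLEquivPolynomialModule R W (f.baseChange R[X] m) =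
      map R f (polynomialTensorProductLEquivPolynomialModule R W m) := by
  induction m using TensorProduct.induction_on with
  | zero => simp
  | tmul p x => simp [polynomialTensorProductLEquivPolynomialModule, PolynomialModule.map_smul]
  | add x y hx hy => simp only [map_add, hx, hy]

theorem baseChange_sub_smul_mul_baseChange_sub_smul_sub {F : Type*} [CommRing F] [Algebra R F]
    (M N : Module.End R W) (lam mu : R) (x : F) :
    (M.baseChange F - x • 1) * (N.baseChange F - x • 1) -
        ((algebraMap R F lam - x) * (algebraMap R F mu - x)) • 1 =
      (M * N - (lam * mu) • 1).baseChange F - x • (M + N - (lam + mu) • 1).baseChange F := by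
  simp only [LinearMap.baseChange_sub, LinearMap.baseChange_mul, LinearMap.baseChange_add,
    LinearMap.baseChange_smul, LinearMap.baseChange_one]
  rw [← algebraMap_smul F (lam * mu), ← algebraMap_smul F (lam + mu), map_mul, map_add]
  refine LinearMap.ext fun w => ?_
  simp only [Module.End.mul_apply, LinearMap.sub_apply, LinearMap.add_apply,
    LinearMap.smul_apply, Module.End.one_apply, map_sub, map_smul]
  module

theorem mem_ker_sub_smul_one_iff {f : Module.End R W} {c : R} {x : W} :
    x ∈ LinearMap.ker (f - c • 1) ↔ f x = c • x := by
  rw [← Module.End.eigenspace_def, Module.End.mem_eigenspace_iff]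

theorem ker_mul_sub_inf_ker_add_sub_ne_bot_iff {M N : Module.End R W} (hMN : Commute M N)
    (lam mu : R) :
    LinearMap.ker (M * N - (lam * mu) • 1) ⊓ LinearMap.ker (M + N - (lam + mu) • 1) ≠ ⊥ ↔
      (LinearMap.ker (M - lam • 1) ⊓ LinearMap.ker (N - mu • 1)) ⊔
        (LinearMap.ker (M - mu • 1) ⊓ LinearMap.ker (N - lam • 1)) ≠ ⊥ := by
  refine ⟨fun h => ?_, fun h => ne_bot_of_le_ne_bot h (sup_le ?_ ?_)⟩
  · obtain ⟨u, hu, hu0⟩ := (Submodule.ne_bot_iff _).mp h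
    simp only [Submodule.mem_inf, mem_ker_sub_smul_one_iff, Module.End.mul_apply,
      LinearMap.add_apply] at hu
    obtain ⟨hprod, hsum⟩ := hu
    rw [Submodule.ne_bot_iff]
    by_cases hMu : M u = mu • u
    · refine ⟨u, Submodule.mem_sup_right ?_, hu0⟩
      simp only [Submodule.mem_inf, mem_ker_sub_smul_one_iff]
      exact ⟨hMu, by linear_combination (norm := module) hsum - hMu⟩
    · refine ⟨M u - mu • u, Submodule.mem_sup_left ?_, sub_ne_zero.mpr hMu⟩
      have hMsum := congrArg M hsum
      have hNM : N (M u) = (lam * mu) • u := by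
        rw [← Module.End.mul_apply, ← hMN.eq]; exact hprod
      simp only [map_add, map_smul] at hMsum
      simp only [Submodule.mem_inf, mem_ker_sub_smul_one_iff, map_sub, map_smul]
      exact ⟨by linear_combination (norm := module) hMsum - hprod,
        by linear_combination (norm := module) hNM - mu • hsum⟩
  all_goals
    intro y hy
    simp only [Submodule.mem_inf, mem_ker_sub_smul_one_iff, Module.End.mul_apply,
      LinearMap.add_apply] at hy ⊢
    obtain ⟨hM, hN⟩ := hy
    exact ⟨by rw [hN, map_smul, hM]; module, by rw [hM, hN]; module⟩

end CommRing

section Field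

variable {K V : Type*} [Field K] [AddCommGroup V] [Module K V]

theorem injective_baseChange_ratFunc_sub_X_smul {A B : Module.End K V}
    (h : Function.Injective (A.baseChange K[X] - (X : K[X]) • B.baseChange K[X])) :
    Function.Injective
      (A.baseChange (RatFunc K) - (RatFunc.X : RatFunc K) • B.baseChange (RatFunc K)) := by
  refine IsLocalizedModule.injective_of_comp_eq_comp (nonZeroDivisors K[X])
    (TensorProduct.AlgebraTensorModule.rTensor K V (Algebra.linearMap K[X] (RatFunc K)))
    (T' := (A.baseChange (RatFunc K) -
      (RatFunc.X : RatFunc K) • B.baseChange (RatFunc K)).restrictScalars K[X]) ?_ h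
  ext x
  simp [← RatFunc.algebraMap_X, TensorProduct.smul_tmul', Algebra.smul_def]

theorem ker_baseChange_ratFunc_sub_X_smul_ne_bot_iff {A B : Module.End K V} (hAB : Commute A B) :
    LinearMap.ker (A.baseChange (RatFunc K) - (RatFunc.X : RatFunc K) • B.baseChange (RatFunc K))
      ≠ ⊥ ↔ LinearMap.ker A ⊓ LinearMap.ker B ≠ ⊥ := by
  constructor
  · intro h
    rw [Ne, LinearMap.ker_eq_bot] at h
    obtain ⟨m, hm, hm0⟩ : ∃ m, (A.baseChange K[X] - (X : K[X]) • B.baseChange K[X]) m = 0 ∧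
        m ≠ 0 := by
      simpa [injective_iff_map_eq_zero] using mt injective_baseChange_ratFunc_sub_X_smul h
    set e := PolynomialModule.polynomialTensorProductLEquivPolynomialModule K V
    refine PolynomialModule.ker_inf_ker_ne_bot hAB (q := e m) (e.map_ne_zero_iff.mpr hm0) ?_
    rw [← PolynomialModule.polynomialTensorProductLEquivPolynomialModule_baseChange,
      ← PolynomialModule.polynomialTensorProductLEquivPolynomialModule_baseChange,
      ← map_smul, ← sub_eq_zero, ← map_sub]
    simpa using congrArg e hm
  · intro h
    obtain ⟨u, ⟨hA, hB⟩, hu⟩ := (Submodule.ne_bot_iff _).mp h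
    refine (Submodule.ne_bot_iff _).mpr
      ⟨1 ⊗ₜ u, ?_, (Module.FaithfullyFlat.one_tmul_eq_zero_iff K V u).not.mpr hu⟩
    simp [LinearMap.mem_ker.mp hA, LinearMap.mem_ker.mp hB]

end Field

theorem stmt_17_general {K V : Type*} [Field K] [AddCommGroup V] [Module K V]
    (M N : Module.End K V) (hcomm : M * N = N * M) (lam mu : K) :
    Module.End.HasEigenvalue
      ((LinearMap.baseChange (RatFunc K) M - (RatFunc.X : RatFunc K) • 1) *
        (LinearMap.baseChange (RatFunc K) N - (RatFunc.X : RatFunc K) • 1))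
      ((algebraMap K (RatFunc K) lam - RatFunc.X) *
       (algebraMap K (RatFunc K) mu - RatFunc.X)) ↔
    (LinearMap.ker (M - lam • 1) ⊓ LinearMap.ker (N - mu • 1)) ⊔
      (LinearMap.ker (M - mu • 1) ⊓ LinearMap.ker (N - lam • 1)) ≠ ⊥ := by
  have hMN : Commute M N := hcomm
  have hAB : Commute (M * N - (lam * mu) • 1) (M + N - (lam + mu) • 1) :=
    ((((Commute.refl M).mul_left hMN.symm).add_right (hMN.mul_left (Commute.refl N))).sub_right
      ((Commute.one_right _).smul_right _)).sub_left ((Commute.one_left _).smul_left _)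
  rw [Module.End.hasEigenvalue_iff, Module.End.eigenspace_def,
    baseChange_sub_smul_mul_baseChange_sub_smul_sub,
    ker_baseChange_ratFunc_sub_X_smul_ne_bot_iff hAB]
  exact ker_mul_sub_inf_ker_add_sub_ne_bot_iff hMN lam mu

theorem stmt_17 {K V : Type*} [Field K] [AddCommGroup V] [Module K V]
    [FiniteDimensional K V]
    (M N : Module.End K V) (hcomm : M * N = N * M) (lam mu : K) :
    Module.End.HasEigenvalue
      ((LinearMap.baseChange (RatFunc K) M - (RatFunc.X : RatFunc K) • 1) *
        (LinearMap.baseChange (RatFunc K) N - (RatFunc.X : RatFunc K) • 1))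
      ((algebraMap K (RatFunc K) lam - RatFunc.X) *
       (algebraMap K (RatFunc K) mu - RatFunc.X)) ↔
    (LinearMap.ker (M - lam • 1) ⊓ LinearMap.ker (N - mu • 1)) ⊔
      (LinearMap.ker (M - mu • 1) ⊓ LinearMap.ker (N - lam • 1)) ≠ ⊥ :=
  stmt_17_general M N hcomm lam mu
end

section
/- Let (V, ω) be a finite-dimensional symplectic vector space over a field K and M an endomorphism of V that is symplectically normal (MM^{*ω} = M^{*ω}M) and diagonalizable. Then M is symplectically diagonalizable: there exists a symplectic basis (e_1,…,e_n,f_1,…,f_n) of (V, ω) consisting of eigenvectors of M. -/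
/-!
`M` and `M^{*ω}` commute and are both diagonalizable (`M^{*ω}` is killed by the same split
squarefree polynomial as `M`), so `V` is spanned by joint eigenvectors. If `e` is a joint
eigenvector with eigenvalues `(a, b)`, adjointness gives `ω e v = 0` for every joint eigenvector
`v` whose eigenvalues are not `(b, a)`; by nondegeneracy some `(b, a)`-eigenvector can therefore be
scaled to an `f` with `ω e f = 1`. The plane spanned by `e` and `f` is invariant under `M` and
`M^{*ω}`, hence so is its `ω`-orthogonal complement, which is a symplectic space of dimension
`2n - 2` on which we induct. A symplectic family of `2n` vectors is linearly independent, hence a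
basis.
-/

open Polynomial Module End

section

variable {K V : Type*} [Field K] [AddCommGroup V] [Module K V]

namespace Module.End

theorem aeval_prod_X_sub_C_eq_zero {ι : Type*} [Fintype ι] [DecidableEq K] (f : End K V)
    (b : Basis ι K V) (c : ι → K) (hb : ∀ i, f (b i) = c i • b i) :
    aeval f (∏ a ∈ Finset.univ.image c, (X - C a)) = 0 := by
  refine b.ext fun i => ?_
  rw [aeval_apply_of_mem_apply_eq_smul (hb i), eval_prod, LinearMap.zero_apply,
    Finset.prod_eq_zero (Finset.mem_image_of_mem c (Finset.mem_univ i)) (by simp), zero_smul]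

theorem ker_aeval_prod_X_sub_C [DecidableEq K] (f : End K V) (S : Finset K) :
    LinearMap.ker (aeval f (∏ a ∈ S, (X - C a))) = ⨆ a ∈ S, f.eigenspace a := by
  induction S using Finset.induction_on with
  | empty => simp [one_eq_id]
  | insert a S ha ih =>
    have hcop : IsCoprime (X - C a) (∏ c ∈ S, (X - C c)) :=
      IsCoprime.prod_right fun c hc => isCoprime_X_sub_C_of_isUnit_sub
        (sub_ne_zero.mpr (ne_of_mem_of_not_mem hc ha).symm).isUnit
    rw [Finset.prod_insert ha, ← sup_ker_aeval_eq_ker_aeval_mul_of_coprime f hcop, ih,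
      Finset.iSup_insert, eigenspace_def]
    simp [Algebra.algebraMap_eq_smul_one]

theorem iSup_eigenspace_eq_top_of_aeval_eq_zero (f : End K V) (S : Finset K)
    (h : aeval f (∏ a ∈ S, (X - C a)) = 0) : ⨆ μ, f.eigenspace μ = ⊤ := by
  classical
  have hker := ker_aeval_prod_X_sub_C f S
  rw [h, LinearMap.ker_zero] at hker
  rw [eq_top_iff, hker]
  exact iSup₂_le fun a _ => le_iSup f.eigenspace a

theorem iSup_eigenspace_restrict_eq_top [FiniteDimensional K V] {f : End K V} {p : Submodule K V}
    (hp : ∀ x ∈ p, f x ∈ p) (h : ⨆ μ, f.eigenspace μ = ⊤) :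
    ⨆ μ, eigenspace (f.restrict hp) μ = ⊤ := by
  apply Submodule.map_injective_of_injective p.injective_subtype
  rw [Submodule.map_iSup, Submodule.map_subtype_top]
  simp only [genEigenspace_restrict, Submodule.map_comap_subtype]
  rw [← Submodule.inf_iSup_genEigenspace hp, h, inf_top_eq]

theorem iSup_eigenspace_inf_eigenspace_eq_top_of_commute [FiniteDimensional K V] {f g : End K V}
    (hf : ⨆ μ, f.eigenspace μ = ⊤) (hg : ⨆ μ, g.eigenspace μ = ⊤) (hfg : Commute f g) :
    ⨆ μν : K × K, f.eigenspace μν.1 ⊓ g.eigenspace μν.2 = ⊤ := by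
  rw [iSup_prod, ← hf]
  refine iSup_congr fun μ => ?_
  rw [← Submodule.inf_iSup_genEigenspace (mapsTo_genEigenspace_of_comm hfg μ 1), hg, inf_top_eq]

theorem apply_mem_span_of_forall_eq_smul {f : End K V} {s : Set V}
    (hs : ∀ x ∈ s, ∃ c : K, f x = c • x) : ∀ x ∈ Submodule.span K s, f x ∈ Submodule.span K s := by
  suffices Submodule.span K s ≤ (Submodule.span K s).comap f from fun x hx => this hx
  refine Submodule.span_le.mpr fun x hx => ?_
  obtain ⟨c, hc⟩ := hs x hx
  rw [SetLike.mem_coe, Submodule.mem_comap, hc]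
  exact Submodule.smul_mem _ c (Submodule.subset_span hx)

end Module.End

theorem Submodule.exists_mem_apply_ne_zero_of_iSup_eq_top {ι M : Type*} [AddCommGroup M]
    [Module K M] {p : ι → Submodule K V} (h : ⨆ i, p i = ⊤) {φ : V →ₗ[K] M} (hφ : φ ≠ 0) :
    ∃ i, ∃ v ∈ p i, φ v ≠ 0 := by
  by_contra! hcon
  refine hφ (LinearMap.ker_eq_top.mp (eq_top_iff.mpr ?_))
  rw [← h]
  exact iSup_le fun i v hv => hcon i v hv

namespace LinearMap.IsAdjointPair

variable {B : LinearMap.BilinForm K V} {f g : End K V}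

theorem aeval (h : IsAdjointPair B B f g) (p : K[X]) :
    IsAdjointPair B B (aeval f p) (aeval g p) := by
  induction p using Polynomial.induction_on' with
  | add p q hp hq => rw [map_add, map_add]; exact hp.add hq
  | monomial n a =>
    have hpow : IsAdjointPair B B ⇑(f ^ n) ⇑(g ^ n) := by
      induction n with
      | zero => exact isAdjointPair_one
      | succ n ih => rw [pow_succ, pow_succ']; exact ih.mul h
    simpa only [aeval_monomial, Algebra.algebraMap_eq_smul_one, smul_mul_assoc, one_mul,
      LinearMap.coe_smul] using hpow.smul a

theorem symm_of_isAlt (hB : B.IsAlt) (h : IsAdjointPair B B f g) : IsAdjointPair B B g f :=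
  fun x y => by rw [← hB.neg_eq, ← h, hB.neg_eq]

theorem eigenvalue_eq_of_apply_ne_zero (h : IsAdjointPair B B f g) {x y : V} {a b : K}
    (hx : f x = a • x) (hy : g y = b • y) (hxy : B x y ≠ 0) : a = b := by
  have := h x y
  rw [hx, hy, map_smul, LinearMap.smul_apply, map_smul, smul_eq_mul, smul_eq_mul] at this
  exact mul_right_cancel₀ hxy this

theorem mapsTo_orthogonal (h : IsAdjointPair B B g f) {P : Submodule K V}
    (hP : ∀ x ∈ P, g x ∈ P) : ∀ y ∈ B.orthogonal P, f y ∈ B.orthogonal P :=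
  fun y hy x hx => by rw [← h]; exact hy _ (hP x hx)

theorem aeval_eq_zero (h : IsAdjointPair B B f g) (hB : B.Nondegenerate) {p : K[X]}
    (hp : Polynomial.aeval f p = 0) : Polynomial.aeval g p = 0 :=
  LinearMap.ext fun y => hB.2 _ fun x => by rw [← h.aeval p, hp]; simp

end LinearMap.IsAdjointPair

namespace LinearMap.BilinForm

variable {ω : LinearMap.BilinForm K V} {e f : V}

section HyperbolicPair

variable (hω : ω.IsAlt) (hef : ω e f = 1)
include hω hef

theorem linearIndependent_pair_of_apply_eq_one : LinearIndependent K ![e, f] := by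
  have hfe : ω f e = -1 := by rw [← hω.neg_eq, hef]
  refine LinearIndependent.pair_iff.mpr fun s t hst => ?_
  have he := congrArg (ω e) hst
  have hf := congrArg (ω f) hst
  simp only [map_add, map_smul, hω.self_eq_zero, hef, hfe, map_zero, smul_eq_mul] at he hf
  exact ⟨by linear_combination -hf, by linear_combination he⟩

theorem disjoint_span_pair_orthogonal :
    Disjoint (Submodule.span K {e, f}) (ω.orthogonal (Submodule.span K {e, f})) := by
  have hfe : ω f e = -1 := by rw [← hω.neg_eq, hef]
  refine Submodule.disjoint_def.mpr fun x hx hxo => ?_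
  obtain ⟨s, t, rfl⟩ := Submodule.mem_span_pair.mp hx
  have he : ω e (s • e + t • f) = 0 := hxo e (Submodule.subset_span (by simp))
  have hf : ω f (s • e + t • f) = 0 := hxo f (Submodule.subset_span (by simp))
  simp only [map_add, map_smul, hω.self_eq_zero, hef, hfe, smul_eq_mul, mul_zero, mul_one,
    mul_neg, add_zero, zero_add, neg_eq_zero] at he hf
  simp [he, hf]

variable [FiniteDimensional K V]

theorem isCompl_span_pair_orthogonal :
    IsCompl (Submodule.span K {e, f}) (ω.orthogonal (Submodule.span K {e, f})) :=
  (isCompl_orthogonal_iff_disjoint hω.isRefl).mpr (disjoint_span_pair_orthogonal hω hef)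

theorem finrank_orthogonal_span_pair_add_two :
    finrank K (ω.orthogonal (Submodule.span K {e, f})) + 2 = finrank K V := by
  have hP : finrank K (Submodule.span K {e, f}) = 2 := by
    rw [← Matrix.range_cons_cons_empty e f ![],
      finrank_span_eq_card (linearIndependent_pair_of_apply_eq_one hω hef), Fintype.card_fin]
  rw [← Submodule.finrank_add_eq_of_isCompl (isCompl_span_pair_orthogonal hω hef), hP, add_comm]

theorem nondegenerate_restrict_orthogonal_span_pair (hnd : ω.Nondegenerate) :
    (ω.restrict (ω.orthogonal (Submodule.span K {e, f}))).Nondegenerate := by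
  rw [restrict_nondegenerate_iff_isCompl_orthogonal hω.isRefl, orthogonal_orthogonal hnd hω.isRefl]
  exact (isCompl_span_pair_orthogonal hω hef).symm

end HyperbolicPair

end LinearMap.BilinForm

def IsSymplecticFamily {ι : Type*} [DecidableEq ι] (ω : LinearMap.BilinForm K V) (e f : ι → V) :
    Prop :=
  (∀ i j, ω (e i) (e j) = 0) ∧ (∀ i j, ω (f i) (f j) = 0) ∧
    ∀ i j, ω (e i) (f j) = if i = j then 1 else 0

namespace IsSymplecticFamily

variable {ω : LinearMap.BilinForm K V}

theorem linearIndependent {ι : Type*} [DecidableEq ι] {e f : ι → V}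
    (h : IsSymplecticFamily ω e f) : LinearIndependent K (Sum.elim e f) := by
  obtain ⟨hee, hff, hef⟩ := h
  refine .of_pairwise_dual_eq_zero_one _ (Sum.elim (fun i => ω.flip (f i)) (fun i => ω (e i)))
    ?_ ?_
  · rintro (i | i) (j | j) hij <;> simp [hee, hff, hef]
    · rintro rfl; exact hij rfl
    · rintro rfl; exact hij rfl
  · rintro (i | i) <;> simp [hef]

theorem cons {n : ℕ} {e f : Fin n → V} (h : IsSymplecticFamily ω e f) (hω : ω.IsAlt) {e₀ f₀ : V}
    (hef₀ : ω e₀ f₀ = 1) (he : ∀ i, e i ∈ ω.orthogonal (Submodule.span K {e₀, f₀}))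
    (hf : ∀ i, f i ∈ ω.orthogonal (Submodule.span K {e₀, f₀})) :
    IsSymplecticFamily ω (Fin.cons e₀ e) (Fin.cons f₀ f) := by
  have he₀ : e₀ ∈ Submodule.span K {e₀, f₀} := Submodule.subset_span (by simp)
  have hf₀ : f₀ ∈ Submodule.span K {e₀, f₀} := Submodule.subset_span (by simp)
  have hsymm : ∀ x y, ω x y = 0 → ω y x = 0 := fun x y => hω.isRefl x y
  obtain ⟨hee, hff, hef⟩ := h
  refine ⟨?_, ?_, ?_⟩ <;> intro i j <;> cases i using Fin.cases <;> cases j using Fin.cases <;>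
    simp [hω.self_eq_zero, hef₀, hee, hff, hef, he _ _ he₀, hf _ _ he₀, hf _ _ hf₀,
      hsymm _ _ (he _ _ he₀), hsymm _ _ (he _ _ hf₀), hsymm _ _ (hf _ _ hf₀), Fin.succ_ne_zero,
      (Fin.succ_ne_zero _).symm]

end IsSymplecticFamily

section Eigenvectors

variable [FiniteDimensional K V] {ω : LinearMap.BilinForm K V} {M Mstar : End K V}

theorem exists_hyperbolic_pair_of_eigenvectors [Nontrivial V] (hω : ω.IsAlt)
    (hnd : ω.Nondegenerate) (hadj : LinearMap.IsAdjointPair ω ω M Mstar)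
    (hcomm : Commute M Mstar) (hM : ⨆ μ, M.eigenspace μ = ⊤)
    (hMstar : ⨆ μ, Mstar.eigenspace μ = ⊤) :
    ∃ e f : V, ω e f = 1 ∧
      ∃ a b : K, M e = a • e ∧ Mstar e = b • e ∧ M f = b • f ∧ Mstar f = a • f := by
  have hjoint := iSup_eigenspace_inf_eigenspace_eq_top_of_commute hM hMstar hcomm
  obtain ⟨⟨a, b⟩, e, he, he₀⟩ :=
    Submodule.exists_mem_apply_ne_zero_of_iSup_eq_top hjoint (one_ne_zero : (1 : End K V) ≠ 0)
  obtain ⟨w, hw⟩ : ∃ w, ω e w ≠ 0 := by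
    by_contra! h
    exact he₀ (hnd.1 e h)
  obtain ⟨⟨c, d⟩, v, hv, hev⟩ :=
    Submodule.exists_mem_apply_ne_zero_of_iSup_eq_top hjoint (φ := ω e) fun h => hw (by simp [h])
  simp only [Submodule.mem_inf, mem_eigenspace_iff] at he hv
  -- Adjointness pairs the `(a, b)`-eigenvector `e` only with `(b, a)`-eigenvectors.
  obtain rfl : b = c := (hadj.symm_of_isAlt hω).eigenvalue_eq_of_apply_ne_zero he.2 hv.1 hev
  obtain rfl : a = d := hadj.eigenvalue_eq_of_apply_ne_zero he.1 hv.2 hev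
  refine ⟨e, (ω e v)⁻¹ • v, by simp [hev], a, b, he.1, he.2, ?_, ?_⟩ <;>
    simp only [map_smul, hv.1, hv.2, smul_comm (ω e v)⁻¹]

theorem exists_isSymplecticFamily_eigenvectors (n : ℕ) (hdim : finrank K V = 2 * n)
    (hω : ω.IsAlt) (hnd : ω.Nondegenerate) (hadj : LinearMap.IsAdjointPair ω ω M Mstar)
    (hcomm : Commute M Mstar) (hM : ⨆ μ, M.eigenspace μ = ⊤)
    (hMstar : ⨆ μ, Mstar.eigenspace μ = ⊤) :
    ∃ e f : Fin n → V, IsSymplecticFamily ω e f ∧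
      (∀ i, ∃ c : K, M (e i) = c • e i) ∧ ∀ i, ∃ c : K, M (f i) = c • f i := by
  induction n generalizing V with
  | zero =>
    exact ⟨Fin.elim0, Fin.elim0, ⟨finZeroElim, finZeroElim, finZeroElim⟩, finZeroElim,
      finZeroElim⟩
  | succ m ih =>
    have : Nontrivial V := Module.nontrivial_of_finrank_pos (R := K) (by omega)
    obtain ⟨e, f, hef, a, b, hMe, hMstare, hMf, hMstarf⟩ :=
      exists_hyperbolic_pair_of_eigenvectors hω hnd hadj hcomm hM hMstar
    set P := Submodule.span K {e, f}
    have hPM : ∀ x ∈ P, M x ∈ P := apply_mem_span_of_forall_eq_smul (by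
      rintro x (rfl | rfl)
      exacts [⟨a, hMe⟩, ⟨b, hMf⟩])
    have hPMstar : ∀ x ∈ P, Mstar x ∈ P := apply_mem_span_of_forall_eq_smul (by
      rintro x (rfl | rfl)
      exacts [⟨b, hMstare⟩, ⟨a, hMstarf⟩])
    set W := ω.orthogonal P
    have hWM : ∀ x ∈ W, M x ∈ W := (hadj.symm_of_isAlt hω).mapsTo_orthogonal hPMstar
    have hWMstar : ∀ x ∈ W, Mstar x ∈ W := hadj.mapsTo_orthogonal hPM
    have hWdim : finrank K W + 2 = finrank K V :=
      LinearMap.BilinForm.finrank_orthogonal_span_pair_add_two hω hef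
    obtain ⟨eW, fW, hW, heW, hfW⟩ := ih (V := W) (ω := ω.restrict W) (by omega)
      (fun x => hω x) (LinearMap.BilinForm.nondegenerate_restrict_orthogonal_span_pair hω hef hnd)
      (fun x y => hadj x y) (LinearMap.restrict_commute hcomm hWM hWMstar)
      (iSup_eigenspace_restrict_eq_top hWM hM) (iSup_eigenspace_restrict_eq_top hWMstar hMstar)
    refine ⟨Fin.cons e (W.subtype ∘ eW), Fin.cons f (W.subtype ∘ fW),
      IsSymplecticFamily.cons (ω := ω) hW hω hef (fun i => (eW i).2) (fun i => (fW i).2), ?_, ?_⟩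
    · refine Fin.cases ⟨a, hMe⟩ fun i => (heW i).imp fun c hc => ?_
      exact congrArg Subtype.val hc
    · refine Fin.cases ⟨b, hMf⟩ fun i => (hfW i).imp fun c hc => ?_
      exact congrArg Subtype.val hc

end Eigenvectors

end

theorem stmt_18 {K V : Type*} [Field K] [AddCommGroup V] [Module K V]
    [FiniteDimensional K V] (n : ℕ) (hdim : Module.finrank K V = 2 * n)
    (ω : V →ₗ[K] V →ₗ[K] K)
    (halt : ∀ v : V, ω v v = 0)
    (hnd : ∀ v : V, (∀ w : V, ω v w = 0) → v = 0)
    (M Mstar : Module.End K V)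
    (hadj : ∀ v w : V, ω (M v) w = ω v (Mstar w))
    (hnormal : M * Mstar = Mstar * M)
    (hdiag : ∃ b : Module.Basis (Fin (2 * n)) K V, ∀ i, ∃ c : K, M (b i) = c • b i) :
    ∃ b : Module.Basis (Fin n ⊕ Fin n) K V,
      (∀ i j, ω (b (Sum.inl i)) (b (Sum.inl j)) = 0) ∧
      (∀ i j, ω (b (Sum.inr i)) (b (Sum.inr j)) = 0) ∧
      (∀ i j, ω (b (Sum.inl i)) (b (Sum.inr j)) = if i = j then 1 else 0) ∧
      (∀ k, ∃ c : K, M (b k) = c • b k) := by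
  classical
  have hω : ω.IsAlt := halt
  have hadj : LinearMap.IsAdjointPair ω ω M Mstar := hadj
  have hnondeg : ω.Nondegenerate := hω.isRefl.nondegenerate_iff_separatingLeft.mpr hnd
  obtain ⟨b, hb⟩ := hdiag
  choose c hc using hb
  have hMp := aeval_prod_X_sub_C_eq_zero M b c hc
  obtain ⟨e, f, hsymp, he, hf⟩ := exists_isSymplecticFamily_eigenvectors n hdim hω hnondeg hadj
    hnormal (iSup_eigenspace_eq_top_of_aeval_eq_zero _ _ hMp)
    (iSup_eigenspace_eq_top_of_aeval_eq_zero _ _ (hadj.aeval_eq_zero hnondeg hMp))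
  have hcard : Fintype.card (Fin n ⊕ Fin n) = finrank K V := by simp [hdim, two_mul]
  refine ⟨basisOfLinearIndependentOfCardEqFinrank' _ hsymp.linearIndependent hcard, ?_⟩
  simp only [coe_basisOfLinearIndependentOfCardEqFinrank', Sum.elim_inl, Sum.elim_inr]
  exact ⟨hsymp.1, hsymp.2.1, hsymp.2.2, Sum.rec he hf⟩
end

section
/- Let (V, ω) be a finite-dimensional symplectic vector space and M a symplectically diagonalizable endomorphism of V. Then M is symplectically similar to its symplectic adjoint M^{*ω}: there exists P ∈ Sp(V, ω) with P^{-1}MP = M^{*ω}. -/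
/-!
Let `(e_i, f_i)` be a symplectic basis of eigenvectors, `M e_i = λ_i e_i`, `M f_i = ν_i f_i`.
Since `ω` pairs `e_i` only with `f_i`, the adjunction `ω (M v) w = ω v (M^* w)` forces
`M^* e_i = ν_i e_i` and `M^* f_i = λ_i f_i`. The symplectic map `e_i ↦ f_i`, `f_i ↦ -e_i`
exchanges the two lists of eigenvalues, hence conjugates `M` into `M^*`.
-/

open Module Sum

section

variable {R V ι : Type*} [CommRing R] [AddCommGroup V] [Module R V]

structure IsSymplecticBasis [DecidableEq ι] (ω : V →ₗ[R] V →ₗ[R] R)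
    (b : Basis (ι ⊕ ι) R V) : Prop where
  inl_inl : ∀ i j, ω (b (inl i)) (b (inl j)) = 0
  inr_inr : ∀ i j, ω (b (inr i)) (b (inr j)) = 0
  inl_inr : ∀ i j, ω (b (inl i)) (b (inr j)) = if i = j then 1 else 0

namespace IsSymplecticBasis

variable [DecidableEq ι] {ω : V →ₗ[R] V →ₗ[R] R} {b : Basis (ι ⊕ ι) R V}

theorem inr_inl (hb : IsSymplecticBasis ω b) (hω : ω.IsAlt) (i j : ι) :
    ω (b (inr i)) (b (inl j)) = -if i = j then 1 else 0 := by
  rw [← hω.neg, hb.inl_inr]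
  simp only [@eq_comm _ j]

theorem eq_swap_of_apply_ne_zero (hb : IsSymplecticBasis ω b) (hω : ω.IsAlt) {k l : ι ⊕ ι}
    (h : ω (b k) (b l) ≠ 0) : l = k.swap := by
  rcases k with i | i <;> rcases l with j | j
  · exact absurd (hb.inl_inl i j) h
  · rw [hb.inl_inr] at h
    simp_all
  · rw [hb.inr_inl hω] at h
    simp_all
  · exact absurd (hb.inr_inr i j) h

theorem adjoint_apply_basis (hb : IsSymplecticBasis ω b) (hω : ω.IsAlt)
    (hω' : ω.SeparatingRight) {M Mstar : Module.End R V}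
    (hadj : ∀ v w, ω (M v) w = ω v (Mstar w))
    {μ : ι ⊕ ι → R} (hμ : ∀ k, M (b k) = μ k • b k) (l : ι ⊕ ι) :
    Mstar (b l) = μ l.swap • b l := by
  have hflip : ω.flip (Mstar (b l)) = μ l.swap • ω.flip (b l) := b.ext fun k => by
    simp only [LinearMap.flip_apply, LinearMap.smul_apply, smul_eq_mul]
    rw [← hadj, hμ, map_smul, LinearMap.smul_apply, smul_eq_mul]
    by_cases h : ω (b k) (b l) = 0
    · simp [h]
    · rw [hb.eq_swap_of_apply_ne_zero hω h, swap_swap]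
  rw [← sub_eq_zero]
  refine hω' _ fun v => ?_
  simpa [sub_eq_zero] using congr($hflip v)

end IsSymplecticBasis

namespace Module.Basis

noncomputable def symplecticSwap (b : Basis (ι ⊕ ι) R V) : V ≃ₗ[R] V :=
  b.equiv ((b.reindex (Equiv.sumComm ι ι)).unitsSMul (Sum.elim 1 (-1))) (Equiv.refl _)

variable (b : Basis (ι ⊕ ι) R V)

@[simp]
theorem symplecticSwap_inl (i : ι) : b.symplecticSwap (b (inl i)) = b (inr i) := by
  simp [symplecticSwap, equiv_apply, unitsSMul_apply]

@[simp]
theorem symplecticSwap_inr (i : ι) : b.symplecticSwap (b (inr i)) = -b (inl i) := by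
  simp [symplecticSwap, equiv_apply, unitsSMul_apply]

theorem apply_symplecticSwap_basis {M : Module.End R V} {μ : ι ⊕ ι → R}
    (hμ : ∀ k, M (b k) = μ k • b k) (k : ι ⊕ ι) :
    M (b.symplecticSwap (b k)) = μ k.swap • b.symplecticSwap (b k) := by
  rcases k with i | i <;> simp [hμ]

theorem symplecticSwap_symm_conj_basis {M : Module.End R V} {μ : ι ⊕ ι → R}
    (hμ : ∀ k, M (b k) = μ k • b k) (k : ι ⊕ ι) :
    b.symplecticSwap.symm (M (b.symplecticSwap (b k))) = μ k.swap • b k := by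
  rw [b.apply_symplecticSwap_basis hμ, map_smul, LinearEquiv.symm_apply_apply]

theorem symplecticSwap_isometry [DecidableEq ι] {ω : V →ₗ[R] V →ₗ[R] R}
    (hb : IsSymplecticBasis ω b) (hω : ω.IsAlt) (v w : V) :
    ω (b.symplecticSwap v) (b.symplecticSwap w) = ω v w := by
  suffices ω.compl₁₂ b.symplecticSwap.toLinearMap b.symplecticSwap.toLinearMap = ω from
    congr($this v w)
  refine LinearMap.ext_basis b b fun k l => ?_
  rcases k with i | i <;> rcases l with j | j <;>
    simp [hb.inl_inl, hb.inr_inr, hb.inl_inr, hb.inr_inl hω]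

end Module.Basis

end

theorem stmt_19_general {K V : Type*} [Field K] [AddCommGroup V] [Module K V]
    (n : ℕ)
    (ω : V →ₗ[K] V →ₗ[K] K)
    (halt : ∀ v : V, ω v v = 0)
    (hnd : ∀ v : V, (∀ w : V, ω v w = 0) → v = 0)
    (M Mstar : Module.End K V)
    (hadj : ∀ v w : V, ω (M v) w = ω v (Mstar w))
    (hdiag : ∃ b : Module.Basis (Fin n ⊕ Fin n) K V,
      (∀ i j, ω (b (Sum.inl i)) (b (Sum.inl j)) = 0) ∧
      (∀ i j, ω (b (Sum.inr i)) (b (Sum.inr j)) = 0) ∧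
      (∀ i j, ω (b (Sum.inl i)) (b (Sum.inr j)) = if i = j then 1 else 0) ∧
      (∀ k, ∃ c : K, M (b k) = c • b k)) :
    ∃ P : V ≃ₗ[K] V, (∀ v w : V, ω (P v) (P w) = ω v w) ∧
      P.symm.toLinearMap ∘ₗ M ∘ₗ P.toLinearMap = Mstar := by
  obtain ⟨b, h₁, h₂, h₃, heigen⟩ := hdiag
  choose μ hμ using heigen
  have hb : IsSymplecticBasis ω b := ⟨h₁, h₂, h₃⟩
  have hsep : ω.SeparatingRight :=
    ((LinearMap.IsAlt.isRefl halt).nondegenerate_iff_separatingLeft.mpr hnd).2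
  refine ⟨b.symplecticSwap, b.symplecticSwap_isometry hb halt, b.ext fun k => ?_⟩
  rw [hb.adjoint_apply_basis halt hsep hadj hμ]
  exact b.symplecticSwap_symm_conj_basis hμ k

theorem stmt_19 {K V : Type*} [Field K] [AddCommGroup V] [Module K V]
    [FiniteDimensional K V] (n : ℕ) (hdim : Module.finrank K V = 2 * n)
    (ω : V →ₗ[K] V →ₗ[K] K)
    (halt : ∀ v : V, ω v v = 0)
    (hnd : ∀ v : V, (∀ w : V, ω v w = 0) → v = 0)
    (M Mstar : Module.End K V)
    (hadj : ∀ v w : V, ω (M v) w = ω v (Mstar w))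
    (hdiag : ∃ b : Module.Basis (Fin n ⊕ Fin n) K V,
      (∀ i j, ω (b (Sum.inl i)) (b (Sum.inl j)) = 0) ∧
      (∀ i j, ω (b (Sum.inr i)) (b (Sum.inr j)) = 0) ∧
      (∀ i j, ω (b (Sum.inl i)) (b (Sum.inr j)) = if i = j then 1 else 0) ∧
      (∀ k, ∃ c : K, M (b k) = c • b k)) :
    ∃ P : V ≃ₗ[K] V, (∀ v w : V, ω (P v) (P w) = ω v w) ∧
      P.symm.toLinearMap ∘ₗ M ∘ₗ P.toLinearMap = Mstar :=
  stmt_19_general n ω halt hnd M Mstar hadj hdiag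
end
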